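/- If X and Y are topological spaces in finite continuous open correspondence (i.e., there exists an n-to-m correspondence R between X and Y that is both continuous and open), then for every ordinal α, X^α is empty if and only if Y^α is empty. -/

import Mathlib

open Set

/-- The Cantor derivative of a subset `A` of a space, relative to the subspace topology:
points of `A` that do not lie in a finite relatively-open subset of `A`. -/
def sderiv {X : Type*} [TopologicalSpace X] (A : Set X) : Set X :=
  {x | x ∈ A ∧ ∀ U : Set X, IsOpen U → x ∈ U → (U ∩ A).Infinite}

/-- Iterated Cantor derivative of a subset. `cbIter A α` is `A^α`. -/
noncomputable def cbIter {X : Type*} [TopologicalSpace X] (A : Set X) (o : Ordinal) : Set X :=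
  Ordinal.limitRecOn o A (fun _ ih => sderiv ih)
    (fun o _ ih => ⋂ (β : Ordinal), ⋂ (h : β < o), ih β h)

/-- `ρ` is the Cantor-Bendixson rank of `X`. -/
def IsCBRank (X : Type*) [TopologicalSpace X] (ρ : Ordinal) : Prop :=
  cbIter (Set.univ : Set X) ρ = ∅ ∧ ∀ β < ρ, cbIter (Set.univ : Set X) β ≠ ∅

/-!
If preimages of open sets under `R` are open and its fibres over points of `Y` are finite, then
`R` maps `X^α` into `Y^α`, by induction on `α`: were `y` isolated in `Y^β`, its finite
neighbourhood would pull back to a neighbourhood of `x` in `X^β` covered by finitely many finite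
fibres. Since `R` and its converse are both total, `X^α` is nonempty iff `Y^α` is.
-/

section

variable {X Y : Type*} [TopologicalSpace X] [TopologicalSpace Y]

lemma cbIter_zero (A : Set X) : cbIter A 0 = A :=
  Ordinal.limitRecOn_zero _ _ _

lemma cbIter_add_one (A : Set X) (o : Ordinal) :
    cbIter A (o + 1) = sderiv (cbIter A o) :=
  Ordinal.limitRecOn_add_one _ _ _ _

lemma cbIter_limit (A : Set X) {o : Ordinal} (h : Order.IsSuccLimit o) :
    cbIter A o = ⋂ (β : Ordinal), ⋂ (_ : β < o), cbIter A β :=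
  Ordinal.limitRecOn_limit _ _ _ _ h

variable {R : X → Y → Prop}

lemma mem_sderiv_of_rel (hcont : ∀ O : Set Y, IsOpen O → IsOpen {x | ∃ y ∈ O, R x y})
    (hfin : ∀ y, {x | R x y}.Finite) {S : Set X} {T : Set Y}
    (hST : ∀ x y, R x y → x ∈ S → y ∈ T)
    {x : X} {y : Y} (hxy : R x y) (hx : x ∈ sderiv S) : y ∈ sderiv T := by
  refine ⟨hST x y hxy hx.1, fun V hV hyV hVT => hx.2 _ (hcont V hV) ⟨y, hyV, hxy⟩ ?_⟩
  have hcover : {x' | ∃ y' ∈ V, R x' y'} ∩ S ⊆ ⋃ y' ∈ V ∩ T, {x' | R x' y'} := by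
    rintro x' ⟨⟨y', hy'V, hx'y'⟩, hx'S⟩
    exact mem_biUnion ⟨hy'V, hST x' y' hx'y' hx'S⟩ hx'y'
  exact (hVT.biUnion fun y' _ => hfin y').subset hcover

lemma mem_cbIter_of_rel (hcont : ∀ O : Set Y, IsOpen O → IsOpen {x | ∃ y ∈ O, R x y})
    (hfin : ∀ y, {x | R x y}.Finite) {A : Set X} {B : Set Y}
    (hAB : ∀ x y, R x y → x ∈ A → y ∈ B) (α : Ordinal) :
    ∀ x y, R x y → x ∈ cbIter A α → y ∈ cbIter B α := by
  induction α using Ordinal.limitRecOn with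
  | zero => simpa only [cbIter_zero] using hAB
  | add_one o ih =>
    rw [cbIter_add_one, cbIter_add_one]
    exact fun x y hxy => mem_sderiv_of_rel hcont hfin ih hxy
  | limit o ho ih =>
    simp only [cbIter_limit _ ho, mem_iInter]
    exact fun x y hxy hx β hβ => ih β hβ x y hxy (hx β hβ)

lemma Set.Nonempty.cbIter_of_rel
    (hcont : ∀ O : Set Y, IsOpen O → IsOpen {x | ∃ y ∈ O, R x y})
    (hfin : ∀ y, {x | R x y}.Finite) {A : Set X} {B : Set Y}
    (hAB : ∀ x y, R x y → x ∈ A → y ∈ B) (hR : ∀ x, ∃ y, R x y) {α : Ordinal}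
    (h : (cbIter A α).Nonempty) : (cbIter B α).Nonempty :=
  let ⟨x, hx⟩ := h
  let ⟨y, hxy⟩ := hR x
  ⟨y, mem_cbIter_of_rel hcont hfin hAB α x y hxy hx⟩

end

theorem cbIter_empty_iff_of_correspondence_general {X Y : Type*} [TopologicalSpace X]
    [TopologicalSpace Y] (R : X → Y → Prop) (n m : ℕ)
    (hsurjX : ∀ x, ∃ y, R x y) (hsurjY : ∀ y, ∃ x, R x y)
    (hcont : ∀ O : Set Y, IsOpen O → IsOpen {x | ∃ y ∈ O, R x y})
    (hopen : ∀ O : Set X, IsOpen O → IsOpen {y | ∃ x ∈ O, R x y})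
    (hfibY : ∀ y, {x | R x y}.Finite ∧ ({x | R x y}).ncard ≤ n)
    (hfibX : ∀ x, {y | R x y}.Finite ∧ ({y | R x y}).ncard ≤ m) :
    ∀ α : Ordinal, (cbIter (Set.univ : Set X) α = ∅ ↔ cbIter (Set.univ : Set Y) α = ∅) := by
  intro α
  simp only [← not_nonempty_iff_eq_empty, not_iff_not]
  exact ⟨Set.Nonempty.cbIter_of_rel hcont (fun y => (hfibY y).1) (fun _ _ _ _ => trivial) hsurjX,
    Set.Nonempty.cbIter_of_rel (R := flip R) hopen (fun x => (hfibX x).1)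
      (fun _ _ _ _ => trivial) hsurjY⟩

/-- Two spaces in finite continuous open correspondence have, for every ordinal `α`,
`X^α = ∅` iff `Y^α = ∅`. -/
theorem cbIter_empty_iff_of_correspondence {X Y : Type*} [TopologicalSpace X]
    [TopologicalSpace Y] (R : X → Y → Prop) (n m : ℕ) (hn : 0 < n) (hm : 0 < m)
    (hsurjX : ∀ x, ∃ y, R x y) (hsurjY : ∀ y, ∃ x, R x y)
    (hcont : ∀ O : Set Y, IsOpen O → IsOpen {x | ∃ y ∈ O, R x y})
    (hopen : ∀ O : Set X, IsOpen O → IsOpen {y | ∃ x ∈ O, R x y})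
    (hfibY : ∀ y, {x | R x y}.Finite ∧ ({x | R x y}).ncard ≤ n)
    (hfibX : ∀ x, {y | R x y}.Finite ∧ ({y | R x y}).ncard ≤ m) :
    ∀ α : Ordinal, (cbIter (Set.univ : Set X) α = ∅ ↔ cbIter (Set.univ : Set Y) α = ∅) :=
  cbIter_empty_iff_of_correspondence_general R n m hsurjX hsurjY hcont hopen hfibY hfibX
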